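/- Let x₁ = (1/√2)(e₁⊗e₁ + e₂⊗e₂) in ℂ³⊗ℂ³ and let s = 1 - 2q with q = P_{x₁} + P_{x₂} + P_{x₃} for pairwise orthonormal x₁, x₂, x₃. If s is block positive, then (y⊗z, P_{x₂}(y⊗z)) = 0 and (y⊗z, P_{x₃}(y⊗z)) = 0 for y = z = (1/√2)(e₁+e₂), and similarly for y = z = e₁ and y = z = e₂; consequently x₂ and x₃ are orthogonal to e₁⊗e₁, e₂⊗e₂, and (1/√2)(e₁⊗e₂+e₂⊗e₁). -/
import Mathlib

open Matrix Kronecker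
open scoped ComplexOrder

noncomputable section

/-- Tensor product of two vectors in `ℂⁿ`. -/
def tens {n : ℕ} (x y : Fin n → ℂ) : Fin n × Fin n → ℂ := fun p => x p.1 * y p.2

/-- Rank-one projection on `ℂⁿ ⊗ ℂⁿ`. -/
def projT {n : ℕ} (v : Fin n × Fin n → ℂ) :
    Matrix (Fin n × Fin n) (Fin n × Fin n) ℂ :=
  Matrix.vecMulVec v (star v)

/-- Standard basis vector of `ℂ³`. -/
def ev (i : Fin 3) : Fin 3 → ℂ := Pi.single i 1

lemma projT_quad {n : ℕ} (v w : Fin n × Fin n → ℂ) :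
    star w ⬝ᵥ (projT v *ᵥ w) = (star w ⬝ᵥ v) * star (star w ⬝ᵥ v) := by
  simp only [projT, Matrix.mulVec, Matrix.vecMulVec_apply, dotProduct, Pi.star_apply,
    Finset.mul_sum, star_sum, star_mul', star_star]
  simp only [Finset.sum_mul]
  rw [Finset.sum_comm]
  exact Finset.sum_congr rfl fun i _ => Finset.sum_congr rfl fun j _ => by ring

lemma tens_dot {n : ℕ} (y z y' z' : Fin n → ℂ) :
    star (tens y z) ⬝ᵥ tens y' z' = (star y ⬝ᵥ y') * (star z ⬝ᵥ z') := by
  simp only [dotProduct, Pi.star_apply, tens, Fintype.sum_prod_type, star_mul',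
    Finset.sum_mul, Finset.mul_sum]
  rw [Finset.sum_comm]
  exact Finset.sum_congr rfl fun i _ => Finset.sum_congr rfl fun j _ => by ring

lemma tens_smul_left {n : ℕ} (a : ℂ) (y z : Fin n → ℂ) :
    tens (a • y) z = a • tens y z := by
  funext p; simp [tens, mul_assoc]

lemma tens_smul_right {n : ℕ} (a : ℂ) (y z : Fin n → ℂ) :
    tens y (a • z) = a • tens y z := by
  funext p; simp [tens]; ring

lemma tens_add_left {n : ℕ} (y y' z : Fin n → ℂ) :
    tens (y + y') z = tens y z + tens y' z := by
  funext p; simp [tens]; ring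

lemma tens_add_right {n : ℕ} (y z z' : Fin n → ℂ) :
    tens y (z + z') = tens y z + tens y z' := by
  funext p; simp [tens]; ring

lemma ev_dot : ∀ i j : Fin 3, star (ev i) ⬝ᵥ ev j = if i = j then 1 else 0 := by
  intro i j
  fin_cases i <;> fin_cases j <;>
    norm_num [ev, dotProduct, Fin.sum_univ_three, Pi.single_apply] <;> simp [eq_comm]

lemma sqc_star : star (((Real.sqrt 2 : ℝ) : ℂ))⁻¹ = (((Real.sqrt 2 : ℝ) : ℂ))⁻¹ := by
  simp [Complex.star_def, map_inv₀, Complex.conj_ofReal]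

lemma sqc_sq : (((Real.sqrt 2 : ℝ) : ℂ))⁻¹ * (((Real.sqrt 2 : ℝ) : ℂ))⁻¹ = 1/2 := by
  rw [← mul_inv, ← Complex.ofReal_mul, Real.mul_self_sqrt (by norm_num)]
  norm_num

lemma sqc_ne : (((Real.sqrt 2 : ℝ) : ℂ))⁻¹ ≠ 0 := by
  have h : Real.sqrt 2 ≠ 0 := by positivity
  simp [h]

lemma key_zero (x₁ x₂ x₃ w : Fin 3 × Fin 3 → ℂ)
    (hbpw : 0 ≤ star w ⬝ᵥ (((1 : Matrix (Fin 3 × Fin 3) (Fin 3 × Fin 3) ℂ)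
          - (2 : ℂ) • (projT x₁ + projT x₂ + projT x₃)) *ᵥ w))
    (hw : star w ⬝ᵥ w = 1)
    (h1 : (star w ⬝ᵥ x₁) * star (star w ⬝ᵥ x₁) = 1/2) :
    star w ⬝ᵥ x₂ = 0 ∧ star w ⬝ᵥ x₃ = 0 := by
  rw [Matrix.sub_mulVec, Matrix.smul_mulVec, Matrix.add_mulVec, Matrix.add_mulVec,
    Matrix.one_mulVec, dotProduct_sub, dotProduct_smul, dotProduct_add, dotProduct_add,
    projT_quad, projT_quad, projT_quad, hw, h1, smul_eq_mul] at hbpw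
  set a := star w ⬝ᵥ x₂
  set b := star w ⬝ᵥ x₃
  simp only [Complex.star_def, Complex.mul_conj] at hbpw
  rw [show ((1:ℂ) - 2 * (1/2 + (Complex.normSq a : ℂ) + (Complex.normSq b : ℂ)))
      = ((1 - 2 * (1/2 + Complex.normSq a + Complex.normSq b) : ℝ) : ℂ) by push_cast; ring]
    at hbpw
  have h : (0:ℝ) ≤ 1 - 2 * (1/2 + Complex.normSq a + Complex.normSq b) := by
    exact_mod_cast hbpw
  have ha : Complex.normSq a = 0 := by nlinarith [Complex.normSq_nonneg a, Complex.normSq_nonneg b]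
  have hb : Complex.normSq b = 0 := by nlinarith [Complex.normSq_nonneg a, Complex.normSq_nonneg b]
  exact ⟨Complex.normSq_eq_zero.mp ha, Complex.normSq_eq_zero.mp hb⟩

/-- let `x₁ = (e₁⊗e₁+e₂⊗e₂)/√2` and `s = 1 - 2q` with
`q = P_{x₁}+P_{x₂}+P_{x₃}` for pairwise orthonormal `x₁, x₂, x₃`. If `s` is block
positive then `P_{x₂}` and `P_{x₃}` annihilate `y⊗z` for
`y = z = (e₁+e₂)/√2`, `y = z = e₁` and `y = z = e₂`; consequently `x₂`, `x₃` are
orthogonal to `e₁⊗e₁`, `e₂⊗e₂` and `(e₁⊗e₂+e₂⊗e₁)/√2`. -/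
theorem constraints_on_x2_x3
    (x₂ x₃ : Fin 3 × Fin 3 → ℂ)
    (x₁ : Fin 3 × Fin 3 → ℂ)
    (hx₁ : x₁ = ((Real.sqrt 2 : ℂ))⁻¹ • (tens (ev 0) (ev 0) + tens (ev 1) (ev 1)))
    (h11 : star x₁ ⬝ᵥ x₁ = 1) (h22 : star x₂ ⬝ᵥ x₂ = 1) (h33 : star x₃ ⬝ᵥ x₃ = 1)
    (h12 : star x₁ ⬝ᵥ x₂ = 0) (h13 : star x₁ ⬝ᵥ x₃ = 0) (h23 : star x₂ ⬝ᵥ x₃ = 0)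
    (hbp : ∀ y z : Fin 3 → ℂ,
      0 ≤ star (tens y z) ⬝ᵥ
        (((1 : Matrix (Fin 3 × Fin 3) (Fin 3 × Fin 3) ℂ)
          - (2 : ℂ) • (projT x₁ + projT x₂ + projT x₃)) *ᵥ tens y z)) :
    ∀ v, (v = x₂ ∨ v = x₃) →
      (let u : Fin 3 → ℂ := ((Real.sqrt 2 : ℂ))⁻¹ • (ev 0 + ev 1)
       star (tens u u) ⬝ᵥ (projT v *ᵥ tens u u) = 0 ∧
       star (tens (ev 0) (ev 0)) ⬝ᵥ (projT v *ᵥ tens (ev 0) (ev 0)) = 0 ∧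
       star (tens (ev 1) (ev 1)) ⬝ᵥ (projT v *ᵥ tens (ev 1) (ev 1)) = 0 ∧
       star (tens (ev 0) (ev 0)) ⬝ᵥ v = 0 ∧
       star (tens (ev 1) (ev 1)) ⬝ᵥ v = 0 ∧
       star (((Real.sqrt 2 : ℂ))⁻¹ • (tens (ev 0) (ev 1) + tens (ev 1) (ev 0))) ⬝ᵥ v = 0) := by
  intro v hv
  set c : ℂ := ((Real.sqrt 2 : ℂ))⁻¹ with hcdef
  set u : Fin 3 → ℂ := c • (ev 0 + ev 1) with hudef
  have hcstar : star c = c := by rw [hcdef]; exact sqc_star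
  have hcc : c * c = 1/2 := by rw [hcdef]; exact sqc_sq
  have e00 : star (ev 0) ⬝ᵥ ev 0 = 1 := by rw [ev_dot]; norm_num
  have e11 : star (ev 1) ⬝ᵥ ev 1 = 1 := by rw [ev_dot]; norm_num
  have e01 : star (ev 0) ⬝ᵥ ev 1 = 0 := by rw [ev_dot]; norm_num
  have e10 : star (ev 1) ⬝ᵥ ev 0 = 0 := by rw [ev_dot]; norm_num
  have hu0 : star u ⬝ᵥ ev 0 = c := by
    simp only [hudef, star_smul, star_add, smul_dotProduct, add_dotProduct, smul_eq_mul,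
      hcstar, e00, e10]
    ring
  have hu1 : star u ⬝ᵥ ev 1 = c := by
    simp only [hudef, star_smul, star_add, smul_dotProduct, add_dotProduct, smul_eq_mul,
      hcstar, e01, e11]
    ring
  have huu : star u ⬝ᵥ u = 1 := by
    simp only [hudef, star_smul, star_add, smul_dotProduct, add_dotProduct,
      dotProduct_smul, dotProduct_add, smul_eq_mul, hcstar, e00, e11, e01, e10]
    rw [show c * (c * (1 + 0) + (c * (0 + 1))) = c * c * 2 by ring, hcc]
    norm_num
  -- norms of the three product vectors
  have nwu : star (tens u u) ⬝ᵥ tens u u = 1 := by rw [tens_dot, huu]; ring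
  have nw00 : star (tens (ev 0) (ev 0)) ⬝ᵥ tens (ev 0) (ev 0) = 1 := by
    rw [tens_dot, e00]; ring
  have nw11 : star (tens (ev 1) (ev 1)) ⬝ᵥ tens (ev 1) (ev 1) = 1 := by
    rw [tens_dot, e11]; ring
  -- overlaps with x₁
  have dx1 : ∀ w : Fin 3 × Fin 3 → ℂ, star w ⬝ᵥ x₁
      = c * (star w ⬝ᵥ tens (ev 0) (ev 0) + star w ⬝ᵥ tens (ev 1) (ev 1)) := by
    intro w
    rw [hx₁, dotProduct_smul, dotProduct_add, smul_eq_mul]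
  have hx1u : star (tens u u) ⬝ᵥ x₁ = c := by
    rw [dx1, tens_dot, tens_dot, hu0, hu1]
    rw [show c * (c * c + c * c) = (c * c) * (2 * c) by ring, hcc]
    ring
  have hx1_00 : star (tens (ev 0) (ev 0)) ⬝ᵥ x₁ = c := by
    rw [dx1, tens_dot, tens_dot, e00, e01]; ring
  have hx1_11 : star (tens (ev 1) (ev 1)) ⬝ᵥ x₁ = c := by
    rw [dx1, tens_dot, tens_dot, e10, e11]; ring
  have hchalf : c * star c = 1/2 := by rw [hcstar]; exact hcc
  -- apply the key lemma at the three product vectors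
  obtain ⟨ku2, ku3⟩ := key_zero x₁ x₂ x₃ (tens u u) (hbp u u) nwu (by rw [hx1u]; exact hchalf)
  obtain ⟨k02, k03⟩ := key_zero x₁ x₂ x₃ (tens (ev 0) (ev 0)) (hbp (ev 0) (ev 0)) nw00
    (by rw [hx1_00]; exact hchalf)
  obtain ⟨k12, k13⟩ := key_zero x₁ x₂ x₃ (tens (ev 1) (ev 1)) (hbp (ev 1) (ev 1)) nw11
    (by rw [hx1_11]; exact hchalf)
  have hvu : star (tens u u) ⬝ᵥ v = 0 := by rcases hv with h | h <;> subst h <;> assumption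
  have hv00 : star (tens (ev 0) (ev 0)) ⬝ᵥ v = 0 := by
    rcases hv with h | h <;> subst h <;> assumption
  have hv11 : star (tens (ev 1) (ev 1)) ⬝ᵥ v = 0 := by
    rcases hv with h | h <;> subst h <;> assumption
  -- expand tens u u
  have hexp : tens u u = c • (c • (tens (ev 0) (ev 0) + tens (ev 0) (ev 1)
      + tens (ev 1) (ev 0) + tens (ev 1) (ev 1))) := by
    rw [hudef, tens_smul_left, tens_smul_right, tens_add_left, tens_add_right, tens_add_right]
    congr 1; congr 1
    abel
  have hwuv : star (tens u u) ⬝ᵥ v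
      = c * c * (star (tens (ev 0) (ev 0)) ⬝ᵥ v + star (tens (ev 0) (ev 1)) ⬝ᵥ v
        + star (tens (ev 1) (ev 0)) ⬝ᵥ v + star (tens (ev 1) (ev 1)) ⬝ᵥ v) := by
    rw [hexp]
    simp only [star_smul, star_add, smul_dotProduct, add_dotProduct, smul_eq_mul, hcstar]
    ring
  have hsum : star (tens (ev 0) (ev 1)) ⬝ᵥ v + star (tens (ev 1) (ev 0)) ⬝ᵥ v = 0 := by
    have h := hvu
    rw [hwuv, hv00, hv11, hcc] at h
    linear_combination 2 * h
  refine ⟨?_, ?_, ?_, hv00, hv11, ?_⟩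
  · rw [projT_quad, hvu]; ring
  · rw [projT_quad, hv00]; ring
  · rw [projT_quad, hv11]; ring
  · have : star (c • (tens (ev 0) (ev 1) + tens (ev 1) (ev 0))) ⬝ᵥ v
        = c * (star (tens (ev 0) (ev 1)) ⬝ᵥ v + star (tens (ev 1) (ev 0)) ⬝ᵥ v) := by
      simp only [star_smul, star_add, smul_dotProduct, add_dotProduct, smul_eq_mul, hcstar]
      try ring
    rw [this, hsum, mul_zero]
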